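/- arXiv:2008.00458 — 7 statements merged into one kernel-verified Lean document; each statement's English description precedes it below -/
import Mathlib

section
/- Let 𝔤 be a 2n-dimensional real almost abelian Lie algebra with codimension-one abelian ideal 𝔥, and let (J,g) be an almost Hermitian structure on 𝔤 (J∘J = -id, g a positive-definite inner product with g(JX,JY) = g(X,Y)); let ω(X,Y) = g(JX,Y). Let e_{2n} be a unit vector orthogonal to 𝔥, set e₁ := -J e_{2n} ∈ 𝔥 (so J e₁ = e_{2n}), and let 𝔥₁ be the orthogonal complement of span{e₁, e_{2n}} in 𝔤 (which is J-invariant). Assume: (i) [e_{2n}, e₁] = a·e₁ + v for some a ∈ ℝ and v ∈ 𝔥₁; (ii) [e_{2n}, Y] ∈ 𝔥₁ for all Y ∈ 𝔥₁, and write A := ad_{e_{2n}}|_{𝔥₁}; (iii) A commutes with J₁ := J|_{𝔥₁}. Then dω = 0 if and only if v = 0 and A is skew-symmetric with respect to g, i.e. g(AY,Z) + g(Y,AZ) = 0 for all Y,Z ∈ 𝔥₁. -/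
/-- A Hermitian structure on a `2n`-dimensional almost abelian Lie algebra, described by
the data `(a, v, A)`, is Kähler if and only if `v = 0` and `A = ad_{e_{2n}}|_{𝔥₁}` is
skew-symmetric. -/
theorem stmt_1 (n : ℕ) (hn : 1 ≤ n) (V : Type*) [AddCommGroup V] [Module ℝ V]
    [FiniteDimensional ℝ V] (hdim : Module.finrank ℝ V = 2 * n)
    -- the Lie bracket
    (br : V →ₗ[ℝ] V →ₗ[ℝ] V)
    (hskew : ∀ x y, br x y = - br y x)
    (hjac : ∀ x y z, br (br x y) z + br (br y z) x + br (br z x) y = 0)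
    -- the codimension-one abelian ideal
    (h : Submodule ℝ V) (hcodim : Module.finrank ℝ h = 2 * n - 1)
    (habel : ∀ x ∈ h, ∀ y ∈ h, br x y = 0)
    (hideal : ∀ x : V, ∀ y ∈ h, br x y ∈ h)
    -- the almost Hermitian structure (J, g)
    (g : V →ₗ[ℝ] V →ₗ[ℝ] ℝ) (hgsymm : ∀ x y, g x y = g y x)
    (hgpos : ∀ x, x ≠ 0 → 0 < g x x)
    (J : V →ₗ[ℝ] V) (hJ2 : ∀ x, J (J x) = -x)
    (hJg : ∀ x y, g (J x) (J y) = g x y)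
    -- the unit vector orthogonal to 𝔥 and the adapted decomposition
    (e2n : V) (he2n : g e2n e2n = 1) (horth : ∀ y ∈ h, g e2n y = 0)
    (hspan : ∀ x : V, ∃ t : ℝ, x - t • e2n ∈ h)
    (e1 : V) (he1def : e1 = - J e2n) (he1 : e1 ∈ h)
    -- 𝔥₁ = orthogonal complement of span{e₁, e_{2n}}
    (H1 : V → Prop) (hH1 : ∀ y, H1 y ↔ g e2n y = 0 ∧ g e1 y = 0)
    -- hypotheses (i), (ii), (iii)
    (a : ℝ) (v : V) (hv : H1 v) (hbr1 : br e2n e1 = a • e1 + v)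
    (hinv : ∀ y, H1 y → H1 (br e2n y))
    (hcomm : ∀ y, H1 y → br e2n (J y) = J (br e2n y)) :
    -- dω = 0 ↔ v = 0 and A is g-skew-symmetric on 𝔥₁
    (∀ x y z : V, -g (J (br x y)) z + g (J (br x z)) y - g (J (br y z)) x = 0) ↔
      (v = 0 ∧ ∀ y z, H1 y → H1 z → g (br e2n y) z + g y (br e2n z) = 0) := by
  -- basic facts
  have hJe1 : J e1 = e2n := by rw [he1def, map_neg, hJ2, neg_neg]
  have hge1e1 : g e1 e1 = 1 := by
    rw [he1def]
    simp only [map_neg, LinearMap.neg_apply, neg_neg, hJg, he2n]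
  have hge2ne1 : g e2n e1 = 0 := horth e1 he1
  have hge1e2n : g e1 e2n = 0 := by rw [hgsymm]; exact hge2ne1
  have hbrxx : ∀ x : V, br x x = 0 := by
    intro x
    have h2 : (2 : ℝ) • br x x = 0 := by
      rw [two_smul]; nth_rewrite 1 [hskew x x]; abel
    have := smul_eq_zero.mp h2
    simpa using this
  have memh : ∀ x : V, g e2n x = 0 → x ∈ h := by
    intro x hx
    obtain ⟨t, ht⟩ := hspan x
    have h0 : g e2n (x - t • e2n) = 0 := horth _ ht
    have ht0 : t = 0 := by
      simp only [map_sub, map_smul, smul_eq_mul, hx, he2n, mul_one, zero_sub,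
        neg_eq_zero] at h0
      exact h0
    rw [ht0] at ht
    simpa using ht
  have hge2nw : ∀ w, H1 w → g e2n w = 0 := fun w hw => ((hH1 w).mp hw).1
  have hge1w : ∀ w, H1 w → g e1 w = 0 := fun w hw => ((hH1 w).mp hw).2
  have hH1h : ∀ w, H1 w → w ∈ h := fun w hw => memh w (hge2nw w hw)
  have hH1J : ∀ w, H1 w → H1 (J w) := by
    intro w hw
    rw [hH1]
    constructor
    · rw [← hJe1, hJg]; exact hge1w w hw
    · rw [he1def]
      simp only [map_neg, LinearMap.neg_apply, hJg, hge2nw w hw, neg_zero]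
  have hH1neg : ∀ w, H1 w → H1 (-w) := by
    intro w hw
    rw [hH1]
    simp only [map_neg, hge2nw w hw, hge1w w hw, neg_zero, and_self]
  -- decomposition of a general vector
  have decomp : ∀ x : V, ∃ t c : ℝ, ∃ w : V, H1 w ∧ x = t • e2n + c • e1 + w := by
    intro x
    obtain ⟨t, ht⟩ := hspan x
    refine ⟨t, g e1 (x - t • e2n), x - t • e2n - g e1 (x - t • e2n) • e1, ?_, by abel⟩
    rw [hH1]
    constructor
    · simp only [map_sub, map_smul, smul_eq_mul, horth _ ht, hge2ne1, mul_zero, sub_zero]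
    · simp only [map_sub, map_smul, smul_eq_mul, hge1e1, mul_one, sub_self]
  constructor
  · -- forward direction
    intro hd
    have hv0 : v = 0 := by
      have hJv : H1 (J v) := hH1J v hv
      have hd1 := hd e2n e1 (J v)
      rw [habel e1 he1 (J v) (hH1h _ hJv)] at hd1
      have h1 : g (J (br e2n e1)) (J v) = g v v := by
        rw [hJg, hbr1]
        simp only [map_add, map_smul, LinearMap.add_apply, LinearMap.smul_apply,
          smul_eq_mul]
        rw [hge1w v hv]
        ring
      have h2 : g (J (br e2n (J v))) e1 = 0 := by
        rw [hgsymm]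
        exact hge1w _ (hH1J _ (hinv _ hJv))
      rw [h1, h2] at hd1
      simp only [map_zero, LinearMap.zero_apply] at hd1
      by_contra hne
      have := hgpos v hne
      linarith
    refine ⟨hv0, ?_⟩
    -- symmetry from dω = 0
    have hsy : ∀ y z, H1 y → H1 z → g (J (br e2n y)) z = g (J (br e2n z)) y := by
      intro y z hy hz
      have hd1 := hd e2n y z
      rw [habel y (hH1h y hy) z (hH1h z hz)] at hd1
      simp only [map_zero, LinearMap.zero_apply] at hd1
      linarith
    intro y z hy hz
    have hy' : H1 (-(J y)) := hH1neg _ (hH1J y hy)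
    have h1 := hsy _ z hy' hz
    have hl : J (br e2n (-(J y))) = br e2n y := by
      rw [map_neg, hcomm y hy, map_neg, hJ2, neg_neg]
    rw [hl] at h1
    have hr : g (J (br e2n z)) (-(J y)) = - g y (br e2n z) := by
      rw [map_neg, hJg, hgsymm]
    rw [hr] at h1
    linarith
  · -- backward direction
    rintro ⟨hv0, hsk⟩
    rw [hv0, add_zero] at hbr1
    -- symmetry of G(y,z) = g (J (br e2n y)) z
    have hsy : ∀ y z, H1 y → H1 z → g (J (br e2n y)) z = g (J (br e2n z)) y := by
      intro y z hy hz
      have h1 : g (J (br e2n y)) z = - g (J y) (br e2n z) := by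
        rw [← hcomm y hy]
        have := hsk (J y) z (hH1J y hy) hz
        linarith
      have h2 : g (J (br e2n z)) y = - g (J y) (br e2n z) := by
        rw [← hJg (J y) (br e2n z), hJ2, map_neg, LinearMap.neg_apply, neg_neg,
          hgsymm y (J (br e2n z))]
      rw [h1, h2]
    -- values of g (J (br e2n w)) against e2n and e1
    have hG2 : ∀ w, H1 w → g (J (br e2n w)) e2n = 0 := by
      intro w hw
      rw [hgsymm]
      exact hge2nw _ (hH1J _ (hinv w hw))
    have hG1 : ∀ w, H1 w → g (J (br e2n w)) e1 = 0 := by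
      intro w hw
      rw [hgsymm]
      exact hge1w _ (hH1J _ (hinv w hw))
    -- key computation of the summand
    have key : ∀ (t₁ c₁ : ℝ) (w₁ : V) (t₂ c₂ : ℝ) (w₂ : V) (t₃ c₃ : ℝ) (w₃ : V),
        H1 w₁ → H1 w₂ → H1 w₃ →
        g (J (br (t₁ • e2n + c₁ • e1 + w₁) (t₂ • e2n + c₂ • e1 + w₂)))
          (t₃ • e2n + c₃ • e1 + w₃)
        = (t₁ * c₂ - t₂ * c₁) * a * t₃
            + t₁ * g (J (br e2n w₂)) w₃ - t₂ * g (J (br e2n w₁)) w₃ := by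
      intro t₁ c₁ w₁ t₂ c₂ w₂ t₃ c₃ w₃ hw₁ hw₂ hw₃
      have hbr : br (t₁ • e2n + c₁ • e1 + w₁) (t₂ • e2n + c₂ • e1 + w₂)
          = ((t₁ * c₂ - t₂ * c₁) * a) • e1 + t₁ • br e2n w₂ - t₂ • br e2n w₁ := by
        have h12 : br e1 e2n = -(a • e1) := by rw [hskew, hbr1]
        have hw12 : br w₁ e2n = -(br e2n w₁) := by rw [hskew]
        simp only [map_add, map_smul, LinearMap.add_apply, LinearMap.smul_apply,
          hbrxx, hbr1, h12, hw12,
          habel e1 he1 w₂ (hH1h w₂ hw₂), habel w₁ (hH1h w₁ hw₁) e1 he1,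
          habel w₁ (hH1h w₁ hw₁) w₂ (hH1h w₂ hw₂),
          habel e1 he1 e1 he1]
        module
      rw [hbr]
      simp only [map_add, map_sub, map_smul, hJe1, LinearMap.add_apply,
        LinearMap.sub_apply, LinearMap.smul_apply, smul_eq_mul,
        he2n, hge2ne1, hge2nw w₃ hw₃,
        hG2 w₁ hw₁, hG2 w₂ hw₂, hG1 w₁ hw₁, hG1 w₂ hw₂]
      ring
    intro x y z
    obtain ⟨t₁, c₁, w₁, hw₁, hx⟩ := decomp x
    obtain ⟨t₂, c₂, w₂, hw₂, hy⟩ := decomp y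
    obtain ⟨t₃, c₃, w₃, hw₃, hz⟩ := decomp z
    rw [hx, hy, hz,
      key t₁ c₁ w₁ t₂ c₂ w₂ t₃ c₃ w₃ hw₁ hw₂ hw₃,
      key t₁ c₁ w₁ t₃ c₃ w₃ t₂ c₂ w₂ hw₁ hw₃ hw₂,
      key t₂ c₂ w₂ t₃ c₃ w₃ t₁ c₁ w₁ hw₂ hw₃ hw₁,
      hsy w₁ w₂ hw₁ hw₂, hsy w₁ w₃ hw₁ hw₃, hsy w₂ w₃ hw₂ hw₃]
    ring
end

section
/- Let 𝔤 = 𝔨₁₇^{-1/2} be the six-dimensional real Lie algebra with basis f₁,…,f₆ and nonzero brackets [f₆,f₁] = f₁, [f₆,f₂] = -½f₂, [f₆,f₃] = -½f₃, and let J be the complex structure Jf₁ = f₆, Jf₂ = f₃, Jf₃ = -f₂, Jf₄ = f₅, Jf₅ = -f₄, Jf₆ = -f₁. Let g be the symmetric bilinear form with g(fᵢ,fᵢ) = 1 for all i, g(f₂,f₄) = g(f₄,f₂) = ½, g(f₃,f₅) = g(f₅,f₃) = ½, and all other entries on basis vectors zero. Then g is positive definite and J-Hermitian (g(JX,JY)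 = g(X,Y)), but the Hermitian structure (J,g) is not SKT, i.e. d(dᶜω) ≠ 0 for ω = g(J·,·). Hence on a six-dimensional almost abelian Lie algebra the SKT condition can hold for some J-Hermitian metrics and fail for others with the same complex structure J. -/
noncomputable section

/-- The underlying vector space of a six-dimensional real Lie algebra. -/
abbrev V6 : Type := Fin 6 → ℝ

/-- The Lie bracket of the almost abelian Lie algebra determined by the matrix `A` of
`ad_{f₆}` (column `j` of `A` lists the coordinates of `[f₆, f_{j+1}]`; the ideal
`span{f₁,…,f₅}` is abelian). -/
def braa (A : Matrix (Fin 6) (Fin 6) ℝ) : V6 →ₗ[ℝ] V6 →ₗ[ℝ] V6 :=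
  LinearMap.mk₂ ℝ (fun x y => x 5 • A.mulVec y - y 5 • A.mulVec x)
    (by intro x x' y; simp [Matrix.mulVec_add, Pi.add_apply, add_smul, smul_add]; module)
    (by intro c x y; simp [Matrix.mulVec_smul, Pi.smul_apply, smul_eq_mul, mul_smul]; module)
    (by intro x y y'; simp [Matrix.mulVec_add, smul_add, add_smul]; module)
    (by intro c x y; simp [Matrix.mulVec_smul, Pi.smul_apply, smul_eq_mul, mul_smul]; module)

/-- The bilinear form on `V6` determined by a matrix `G`. -/
def gOf (G : Matrix (Fin 6) (Fin 6) ℝ) : V6 →ₗ[ℝ] V6 →ₗ[ℝ] ℝ :=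
  LinearMap.mk₂ ℝ (fun x y => dotProduct x (G.mulVec y))
    (by intro x x' y; simp [add_dotProduct])
    (by intro c x y; simp [smul_dotProduct, smul_eq_mul])
    (by intro x y y'; simp [Matrix.mulVec_add, dotProduct_add])
    (by intro c x y; simp [Matrix.mulVec_smul, dotProduct_smul, smul_eq_mul])

/-- The standard inner product, making `f₁,…,f₆` orthonormal. -/
def gstd : V6 →ₗ[ℝ] V6 →ₗ[ℝ] ℝ := gOf 1

/-- The linear endomorphism of `V6` determined by a matrix. -/
def endOf (M : Matrix (Fin 6) (Fin 6) ℝ) : V6 →ₗ[ℝ] V6 := Matrix.toLin' M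

/-- `br` is a Lie bracket: antisymmetric and satisfying the Jacobi identity
(bilinearity is built into the type). -/
def IsBracket (br : V6 →ₗ[ℝ] V6 →ₗ[ℝ] V6) : Prop :=
  (∀ x y, br x y = - br y x) ∧
  (∀ x y z, br (br x y) z + br (br y z) x + br (br z x) y = 0)

/-- The Lie algebra has an abelian ideal of codimension one. -/
def IsAlmostAbelian (br : V6 →ₗ[ℝ] V6 →ₗ[ℝ] V6) : Prop :=
  ∃ h : Submodule ℝ V6, Module.finrank ℝ h = 5 ∧
    (∀ x ∈ h, ∀ y ∈ h, br x y = 0) ∧ (∀ x : V6, ∀ y ∈ h, br x y ∈ h)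

/-- Nilpotency of the Lie algebra: some length of iterated brackets
`[x₁,[x₂,…,[xₙ,y]…]]` always vanishes. -/
def IsNilpotentBr (br : V6 →ₗ[ℝ] V6 →ₗ[ℝ] V6) : Prop :=
  ∃ n : ℕ, ∀ x : Fin n → V6, ∀ y : V6, (List.ofFn x).foldr (fun a b => br a b) y = 0

/-- The Nijenhuis tensor of `J`. -/
def Nij (br : V6 →ₗ[ℝ] V6 →ₗ[ℝ] V6) (J : V6 →ₗ[ℝ] V6) (x y : V6) : V6 :=
  br (J x) (J y) - br x y - J (br (J x) y) - J (br x (J y))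

/-- A complex structure: `J ∘ J = -id` with vanishing Nijenhuis tensor. -/
def IsCpxStr (br : V6 →ₗ[ℝ] V6 →ₗ[ℝ] V6) (J : V6 →ₗ[ℝ] V6) : Prop :=
  (∀ x, J (J x) = -x) ∧ (∀ x y, Nij br J x y = 0)

/-- A Hermitian structure: a complex structure together with a positive-definite
compatible inner product. -/
def IsHermStr (br : V6 →ₗ[ℝ] V6 →ₗ[ℝ] V6) (J : V6 →ₗ[ℝ] V6)
    (g : V6 →ₗ[ℝ] V6 →ₗ[ℝ] ℝ) : Prop :=
  IsCpxStr br J ∧ (∀ x y, g x y = g y x) ∧ (∀ x, x ≠ 0 → 0 < g x x) ∧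
    (∀ x y, g (J x) (J y) = g x y)

/-- The fundamental form `ω = g(J·,·)`. -/
def fund (J : V6 →ₗ[ℝ] V6) (g : V6 →ₗ[ℝ] V6 →ₗ[ℝ] ℝ) : V6 → V6 → ℝ :=
  fun x y => g (J x) y

/-- The Chevalley–Eilenberg differential of a 2-form. -/
def d2 (br : V6 →ₗ[ℝ] V6 →ₗ[ℝ] V6) (ω : V6 → V6 → ℝ) : V6 → V6 → V6 → ℝ :=
  fun x y z => -ω (br x y) z + ω (br x z) y - ω (br y z) x

/-- The Chevalley–Eilenberg differential of a 3-form. -/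
def d3 (br : V6 →ₗ[ℝ] V6 →ₗ[ℝ] V6) (H : V6 → V6 → V6 → ℝ) : V6 → V6 → V6 → V6 → ℝ :=
  fun x y z w => -H (br x y) z w + H (br x z) y w - H (br x w) y z
    - H (br y z) x w + H (br y w) x z - H (br z w) x y

/-- The form `dᶜω`, where `dᶜω(X,Y,Z) = dω(JX,JY,JZ)` and `ω = g(J·,·)`. -/
def dC (br : V6 →ₗ[ℝ] V6 →ₗ[ℝ] V6) (J : V6 →ₗ[ℝ] V6)
    (g : V6 →ₗ[ℝ] V6 →ₗ[ℝ] ℝ) : V6 → V6 → V6 → ℝ :=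
  fun x y z => d2 br (fund J g) (J x) (J y) (J z)

/-- A Kähler structure: a Hermitian structure with closed fundamental form. -/
def IsKahlerStr (br : V6 →ₗ[ℝ] V6 →ₗ[ℝ] V6) (J : V6 →ₗ[ℝ] V6)
    (g : V6 →ₗ[ℝ] V6 →ₗ[ℝ] ℝ) : Prop :=
  IsHermStr br J g ∧ ∀ x y z, d2 br (fund J g) x y z = 0

/-- An SKT (pluriclosed) structure: a Hermitian structure with `d(dᶜω) = 0`. -/
def IsSKTStr (br : V6 →ₗ[ℝ] V6 →ₗ[ℝ] V6) (J : V6 →ₗ[ℝ] V6)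
    (g : V6 →ₗ[ℝ] V6 →ₗ[ℝ] ℝ) : Prop :=
  IsHermStr br J g ∧ ∀ x y z w, d3 br (dC br J g) x y z w = 0

/-- A generalized Kähler structure `(J₊, J₋, g)`. -/
def IsGenKahler (br : V6 →ₗ[ℝ] V6 →ₗ[ℝ] V6) (Jp Jm : V6 →ₗ[ℝ] V6)
    (g : V6 →ₗ[ℝ] V6 →ₗ[ℝ] ℝ) : Prop :=
  IsHermStr br Jp g ∧ IsHermStr br Jm g ∧
    (∀ x y z, dC br Jp g x y z + dC br Jm g x y z = 0) ∧
    (∀ x y z w, d3 br (dC br Jp g) x y z w = 0)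

/-- Unimodularity: every adjoint operator is traceless. -/
def Unimodular (br : V6 →ₗ[ℝ] V6 →ₗ[ℝ] V6) : Prop :=
  ∀ x : V6, LinearMap.trace ℝ V6 (br x) = 0

/-- Isomorphism of Lie algebra structures on `V6`. -/
def LieIso (br br' : V6 →ₗ[ℝ] V6 →ₗ[ℝ] V6) : Prop :=
  ∃ φ : V6 ≃ₗ[ℝ] V6, ∀ x y, φ (br x y) = br' (φ x) (φ y)

/-- The basis 3-form `fⁱ ∧ fʲ ∧ f^k`. -/
def tri (i j k : Fin 6) : V6 → V6 → V6 → ℝ := fun x y z =>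
  Matrix.det !![x i, x j, x k; y i, y j, y k; z i, z j, z k]

/-- The complex structure `J f₁ = f₆`, `J f₂ = f₃`, `J f₃ = -f₂`, `J f₄ = f₅`,
`J f₅ = -f₄`, `J f₆ = -f₁`. -/
def JP : V6 →ₗ[ℝ] V6 :=
  endOf !![0,0,0,0,0,-1; 0,0,-1,0,0,0; 0,1,0,0,0,0; 0,0,0,0,-1,0; 0,0,0,1,0,0; 1,0,0,0,0,0]

/-- The Lie algebra `𝔨₁₇^p`. -/
def k17 (p : ℝ) : V6 →ₗ[ℝ] V6 →ₗ[ℝ] V6 :=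
  braa !![1,0,0,0,0,0; 0,p,0,0,0,0; 0,0,p,0,0,0; 0,0,0,0,0,0; 0,0,0,0,0,0; 0,0,0,0,0,0]

/-- The Lie algebra `𝔨₁₇^{-1/2}`, with brackets `[f₆,f₁] = f₁`, `[f₆,f₂] = -½f₂`,
`[f₆,f₃] = -½f₃`. -/
def br17 : V6 →ₗ[ℝ] V6 →ₗ[ℝ] V6 := k17 (-1/2)

/-- The non-standard `J`-Hermitian metric on `𝔨₁₇^{-1/2}`. -/
def g6 : V6 →ₗ[ℝ] V6 →ₗ[ℝ] ℝ :=
  gOf !![1,0,0,0,0,0; 0,1,0,1/2,0,0; 0,0,1,0,1/2,0; 0,1/2,0,1,0,0; 0,0,1/2,0,1,0; 0,0,0,0,0,1]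

/-!
In the coordinates `x₁,…,x₆` of `f₁,…,f₆`,
`2 g6(x,x) - |x|² = x₁² + (x₂ + x₄)² + (x₃ + x₅)² + x₆²`, so `g6 ≥ ½|·|²` is positive definite.
Among `f₁, f₂, f₅, f₆` the only nonzero brackets are `[f₁,f₆] = -f₁` and `[f₂,f₆] = ½f₂`, which
give `d(dᶜω)(f₁,f₂,f₅,f₆) = ½ dᶜω(f₁,f₂,f₅) = ¼ g(f₂,f₄) = 1/8`; this term vanishes for the
standard metric.
-/

lemma g6_apply (x y : V6) :
    g6 x y = x 0 * y 0 + x 1 * (y 1 + y 3 / 2) + x 2 * (y 2 + y 4 / 2)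
      + x 3 * (y 1 / 2 + y 3) + x 4 * (y 2 / 2 + y 4) + x 5 * y 5 := by
  simp [g6, gOf, dotProduct, Matrix.mulVec, Fin.sum_univ_six]
  ring

lemma JP_apply (x : V6) : JP x = ![-x 5, -x 2, x 1, -x 4, x 3, x 0] := by
  ext i
  fin_cases i <;> simp [JP, endOf, Matrix.mulVec, dotProduct, Fin.sum_univ_six]

lemma br17_apply (x y : V6) :
    br17 x y = ![x 5 * y 0 - y 5 * x 0, -(x 5 * y 1 - y 5 * x 1) / 2,
      -(x 5 * y 2 - y 5 * x 2) / 2, 0, 0, 0] := by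
  ext i
  fin_cases i <;> simp [br17, k17, braa, dotProduct, Fin.sum_univ_six] <;> ring

lemma g6_comm (x y : V6) : g6 x y = g6 y x := by
  rw [g6_apply, g6_apply]
  ring

lemma g6_JP_JP (x y : V6) : g6 (JP x) (JP y) = g6 x y := by
  rw [g6_apply, g6_apply, JP_apply, JP_apply]
  simp only [Matrix.cons_val]
  ring

lemma dotProduct_self_le_two_mul_g6 (x : V6) : x ⬝ᵥ x ≤ 2 * g6 x x := by
  rw [g6_apply]
  simp only [dotProduct, Fin.sum_univ_six]
  nlinarith [sq_nonneg (x 0), sq_nonneg (x 1 + x 3), sq_nonneg (x 2 + x 4), sq_nonneg (x 5)]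

lemma g6_self_pos {x : V6} (hx : x ≠ 0) : 0 < g6 x x := by
  have hdot : 0 < x ⬝ᵥ x := by
    simpa only [star_trivial] using Matrix.dotProduct_star_self_pos_iff.mpr hx
  linarith [dotProduct_self_le_two_mul_g6 x]

lemma d3_dC_br17_JP_g6_apply :
    d3 br17 (dC br17 JP g6) (Pi.single 0 1) (Pi.single 1 1) (Pi.single 4 1) (Pi.single 5 1)
      = 1 / 8 := by
  simp [d3, dC, d2, fund, br17_apply, JP_apply, g6_apply]
  norm_num

/-- On `𝔨₁₇^{-1/2}` with the complex structure `J` of `stmt_5`, the metric `g6` is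
positive definite and `J`-Hermitian but the Hermitian structure `(J, g6)` is not SKT.
Hence the SKT condition depends on the choice of Hermitian metric for a fixed `J`. -/
theorem stmt_6 :
    (∀ x y, g6 x y = g6 y x) ∧
    (∀ x : V6, x ≠ 0 → 0 < g6 x x) ∧
    (∀ x y, g6 (JP x) (JP y) = g6 x y) ∧
    ¬ (∀ x y z w, d3 br17 (dC br17 JP g6) x y z w = 0) := by
  refine ⟨g6_comm, fun x hx => g6_self_pos hx, g6_JP_JP, fun hSKT => ?_⟩
  have h := hSKT (Pi.single 0 1) (Pi.single 1 1) (Pi.single 4 1) (Pi.single 5 1)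
  rw [d3_dC_br17_JP_g6_apply] at h
  norm_num at h
end
end

section
/- Let 𝔤 be the six-dimensional real Lie algebra with orthonormal basis e₁,…,e₆ (with respect to an inner product g), abelian ideal 𝔥 = span{e₁,…,e₅}, and brackets [e₆,e₁] = a·e₁ + v₁e₂ + v₂e₃ + v₃e₄ + v₄e₅, [e₆,e₂] = A₁₁e₂ + A₂₁e₃ - A₂₄e₄ - A₁₄e₅, [e₆,e₃] = A₁₂e₂ + A₂₂e₃ - A₂₃e₄ - A₁₃e₅, [e₆,e₄] = A₁₃e₂ + A₂₃e₃ + A₂₂e₄ + A₁₂e₅, [e₆,e₅] = A₁₄e₂ + A₂₄e₃ + A₂₁e₄ + A₁₁e₅, for real numbers a, vᵢ, A_{jk}, with all brackets among e₁,…,e₅ zero. Let J be given by Je₁ = e₆, Je₂ = e₅, Je₃ = e₄, Je₄ = -e₃, Je₅ = -e₂, Je₆ = -e₁, and ω = g(J·,·). Then the torsion 3-form H = dᶜω equals (A₁₃-A₂₄)(e^{123}-e^{145}) - (A₁₂+A₂₁)(e^{124}+e^{135}) - 2A₂₂·e^{134} - 2A₁₁·e^{125} - v₁·e^{126} - v₂·e^{136}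 - v₃·e^{146} - v₄·e^{156}, where e¹,…,e⁶ is the dual basis and e^{ijk} = eⁱ∧eʲ∧e^k. -/
noncomputable section

/-- The complex structure `J e₁ = e₆`, `J e₂ = e₅`, `J e₃ = e₄`, `J e₄ = -e₃`,
`J e₅ = -e₂`, `J e₆ = -e₁`. -/
def J7 : V6 →ₗ[ℝ] V6 :=
  endOf !![0,0,0,0,0,-1; 0,0,0,0,-1,0; 0,0,0,-1,0,0; 0,0,1,0,0,0; 0,1,0,0,0,0; 1,0,0,0,0,0]

/-! The computation is entirely explicit: `ω = e¹⁶ + e²⁵ + e³⁴`, the bracket is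
`[x, y] = x₆ A y - y₆ A x` with `A` the matrix of `ad e₆`, so `dᶜω(x, y, z) = dω(Jx, Jy, Jz)`
becomes a polynomial identity in the coordinates of `x`, `y`, `z` (indexed from `0`, so `x₆` is
`x 5`). -/

open Matrix

lemma braa_apply (A : Matrix (Fin 6) (Fin 6) ℝ) (x y : V6) :
    braa A x y = x 5 • A *ᵥ y - y 5 • A *ᵥ x := rfl

lemma J7_apply (x : V6) : J7 x = ![-x 5, -x 4, -x 3, x 2, x 1, x 0] := by
  ext i
  fin_cases i <;> simp [J7, endOf, mulVec, dotProduct, Fin.sum_univ_six]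

lemma gstd_apply (x y : V6) : gstd x y = x ⬝ᵥ y := by
  simp [gstd, gOf]

lemma fund_J7_gstd (x y : V6) :
    fund J7 gstd x y = x 0 * y 5 - x 5 * y 0 + x 1 * y 4 - x 4 * y 1 + x 2 * y 3 - x 3 * y 2 := by
  simp only [fund, gstd_apply, J7_apply, dotProduct, Fin.sum_univ_six, cons_val_zero,
    cons_val_one, cons_val]
  ring

lemma tri_apply (i j k : Fin 6) (x y z : V6) :
    tri i j k x y z =
      x i * (y j * z k - y k * z j) - x j * (y i * z k - y k * z i)
        + x k * (y i * z j - y j * z i) := by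
  simp only [tri, det_fin_three, of_apply, cons_val', cons_val_zero, cons_val_fin_one,
    cons_val_one, cons_val]
  ring

lemma adE6_mulVec (a v1 v2 v3 v4 A11 A12 A13 A14 A21 A22 A23 A24 : ℝ) (w : V6) :
    !![a,0,0,0,0,0;
        v1,A11,A12,A13,A14,0;
        v2,A21,A22,A23,A24,0;
        v3,-A24,-A23,A22,A21,0;
        v4,-A14,-A13,A12,A11,0;
        0,0,0,0,0,0] *ᵥ w =
      ![a * w 0,
        v1 * w 0 + A11 * w 1 + A12 * w 2 + A13 * w 3 + A14 * w 4,
        v2 * w 0 + A21 * w 1 + A22 * w 2 + A23 * w 3 + A24 * w 4,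
        v3 * w 0 - A24 * w 1 - A23 * w 2 + A22 * w 3 + A21 * w 4,
        v4 * w 0 - A14 * w 1 - A13 * w 2 + A12 * w 3 + A11 * w 4,
        0] := by
  ext i
  fin_cases i <;> simp [mulVec, dotProduct, Fin.sum_univ_six] <;> ring

/-- The torsion 3-form `H = dᶜω` of a Hermitian almost abelian Lie algebra with data
`(a, v, A)`, computed explicitly. -/
theorem stmt_7 (a v1 v2 v3 v4 A11 A12 A13 A14 A21 A22 A23 A24 : ℝ) :
    ∀ x y z : V6,
      dC (braa !![a,0,0,0,0,0;
                  v1,A11,A12,A13,A14,0;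
                  v2,A21,A22,A23,A24,0;
                  v3,-A24,-A23,A22,A21,0;
                  v4,-A14,-A13,A12,A11,0;
                  0,0,0,0,0,0]) J7 gstd x y z =
        (A13 - A24) * (tri 0 1 2 x y z - tri 0 3 4 x y z)
        - (A12 + A21) * (tri 0 1 3 x y z + tri 0 2 4 x y z)
        - 2 * A22 * tri 0 2 3 x y z - 2 * A11 * tri 0 1 4 x y z
        - v1 * tri 0 1 5 x y z - v2 * tri 0 2 5 x y z
        - v3 * tri 0 3 5 x y z - v4 * tri 0 4 5 x y z := by
  intro x y z
  simp only [dC, d2, fund_J7_gstd, braa_apply, adE6_mulVec, J7_apply, tri_apply, Pi.sub_apply,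
    smul_cons, smul_eq_mul, smul_empty, cons_val, cons_val_zero, cons_val_one]
  ring
end
end

section
/- Let 𝔤 be a six-dimensional non-nilpotent real almost abelian Lie algebra which admits an SKT structure (J,g) but does not admit any Kähler structure (i.e., no Hermitian structure (J',g') on 𝔤 has closed fundamental form). Then the torsion 3-form H = dᶜω of the SKT structure (J,g) is not exact: there exists no 2-form η on 𝔤 with dη = H, where d is the Chevalley–Eilenberg differential. -/
noncomputable section

/-!
Let `e` be a unit normal to the abelian ideal, `A = ad_e` and `𝔨 = {e, J e}ᗮ`. Integrability
of `J` makes `A` preserve `𝔨` and commute with `J` there. If `dᶜω = dη`, then `dᶜω` vanishes on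
triples from the abelian ideal, which forces `A` to be skew on `𝔨`; with `a = g(A J e, J e)`,
this gives `w ∈ 𝔨` with `A (J e + w) = a (J e + w)` (for `a = 0` one also evaluates
`dη = dᶜω` on `(z, J e, e)` for `z ∈ ker A ∩ 𝔨`). Conjugating `(J, g)` by the transvection
`x ↦ x + g(x, J e) w` gives a Hermitian structure for which `ad_e` is a `J`-linear skew map
plus `a` times the projection onto `J e + w`, and such a structure is Kähler.
-/

section PositiveDefinite

open Module

variable {V : Type*} [AddCommGroup V] [Module ℝ V] [FiniteDimensional ℝ V]
  {g : V →ₗ[ℝ] V →ₗ[ℝ] ℝ}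

theorem exists_unit_normal (hsym : ∀ x y, g x y = g y x) (hpos : ∀ x, x ≠ 0 → 0 < g x x)
    (h : Submodule ℝ V) (hh : finrank ℝ h + 1 = finrank ℝ V) :
    ∃ e, g e e = 1 ∧ ∀ y, y ∈ h ↔ g y e = 0 := by
  have hker : LinearMap.ker (g.domRestrict₂ h) ≠ ⊥ :=
    LinearMap.ker_ne_bot_of_finrank_lt (by rw [finrank_linearMap_self]; omega)
  obtain ⟨e₀, he₀, he₀_ne⟩ := Submodule.exists_mem_ne_zero_of_ne_bot hker
  have he₀_perp : ∀ y ∈ h, g e₀ y = 0 := fun y hy =>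
    congrArg (fun f => f ⟨y, hy⟩) (LinearMap.mem_ker.1 he₀)
  set c := √(g e₀ e₀)
  have hc : 0 < c := Real.sqrt_pos.2 (hpos e₀ he₀_ne)
  refine ⟨c⁻¹ • e₀, ?_, ?_⟩
  · have hcc : c * c = g e₀ e₀ := Real.mul_self_sqrt (hpos e₀ he₀_ne).le
    simp only [map_smul, LinearMap.smul_apply, smul_eq_mul, ← hcc]
    field_simp
  have hle : h ≤ LinearMap.ker (g.flip (c⁻¹ • e₀)) := fun y hy => by
    simp [hsym y, he₀_perp y hy]
  have hne : LinearMap.ker (g.flip (c⁻¹ • e₀)) ≠ ⊤ := fun htop => by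
    have : g (c⁻¹ • e₀) (c⁻¹ • e₀) = 0 := LinearMap.congr_fun (LinearMap.ker_eq_top.1 htop) _
    exact (hpos _ (smul_ne_zero (inv_ne_zero hc.ne') he₀_ne)).ne' this
  have heq := Submodule.eq_of_le_of_finrank_le hle (by have := Submodule.finrank_lt hne; omega)
  intro y
  rw [heq]
  rfl

theorem surjective_smul_sub_of_skew (hpos : ∀ x, x ≠ 0 → 0 < g x x) {B : V →ₗ[ℝ] V}
    (hB : ∀ x y, g (B x) y = -g x (B y)) {a : ℝ} (ha : a ≠ 0) :
    Function.Surjective (a • LinearMap.id - B : V →ₗ[ℝ] V) := by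
  refine LinearMap.injective_iff_surjective.1 <| LinearMap.ker_eq_bot.1 <|
    (Submodule.eq_bot_iff _).2 fun x hx => ?_
  have hBx : B x = a • x := (sub_eq_zero.1 (LinearMap.mem_ker.1 hx)).symm
  by_contra hne
  have := hB x x
  simp only [hBx, map_smul, LinearMap.smul_apply, smul_eq_mul] at this
  exact mul_ne_zero ha (hpos x hne).ne' (by linarith)

theorem range_sup_ker_eq_top_of_skew (hpos : ∀ x, x ≠ 0 → 0 < g x x) {B : V →ₗ[ℝ] V}
    (hB : ∀ x y, g (B x) y = -g x (B y)) : LinearMap.range B ⊔ LinearMap.ker B = ⊤ := by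
  refine Submodule.eq_top_of_disjoint _ _ (LinearMap.finrank_range_add_finrank_ker B).ge ?_
  rw [Submodule.disjoint_def]
  rintro _ ⟨u, rfl⟩ hu
  by_contra hne
  have := hB u (B u)
  rw [LinearMap.mem_ker.1 hu, map_zero, neg_zero] at this
  exact (hpos _ hne).ne' this

end PositiveDefinite

section AbelianIdeal

variable {V : Type*} [AddCommGroup V] [Module ℝ V] {g : V →ₗ[ℝ] V →ₗ[ℝ] ℝ}
  {br : V →ₗ[ℝ] V →ₗ[ℝ] V} {h : Submodule ℝ V} {e : V}

theorem self_bracket_eq_zero (hanti : ∀ x y, br x y = -br y x) (x : V) : br x x = 0 := by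
  have : (2 : ℝ) • br x x = 0 := by
    rw [two_smul]
    nth_rewrite 1 [hanti]
    exact neg_add_cancel _
  exact (smul_eq_zero.1 this).resolve_left two_ne_zero

theorem sub_smul_mem_of_unit_normal (hee : g e e = 1) (hmem : ∀ y, y ∈ h ↔ g y e = 0)
    (y : V) : y - g y e • e ∈ h := by
  simp [hmem, hee]

theorem bracket_eq_of_abelian_ideal (hanti : ∀ x y, br x y = -br y x)
    (habel : ∀ x ∈ h, ∀ y ∈ h, br x y = 0) (hee : g e e = 1) (hmem : ∀ y, y ∈ h ↔ g y e = 0)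
    (x y : V) : br x y = g x e • br e y - g y e • br e x := by
  have := habel _ (sub_smul_mem_of_unit_normal hee hmem x) _
    (sub_smul_mem_of_unit_normal hee hmem y)
  simp only [map_sub, map_smul, LinearMap.sub_apply, LinearMap.smul_apply, hanti x e,
    self_bracket_eq_zero hanti] at this
  linear_combination (norm := module) this

theorem ad_perp_of_ideal (hanti : ∀ x y, br x y = -br y x)
    (hideal : ∀ x, ∀ y ∈ h, br x y ∈ h) (hee : g e e = 1) (hmem : ∀ y, y ∈ h ↔ g y e = 0)
    (y : V) : g (br e y) e = 0 := by
  have := hideal e _ (sub_smul_mem_of_unit_normal hee hmem y)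
  rwa [map_sub, map_smul, self_bracket_eq_zero hanti, smul_zero, sub_zero, hmem] at this

end AbelianIdeal

theorem LinearEquiv.transvection_symm_apply {V : Type*} [AddCommGroup V] [Module ℝ V]
    {f : Module.Dual ℝ V} {v : V} (h : f v = 0) (x : V) :
    (LinearEquiv.transvection h).symm x = x - f x • v := by
  rw [LinearEquiv.transvection.symm_eq h (by simp [h]), LinearEquiv.transvection.apply,
    smul_neg, sub_eq_add_neg]

theorem isKahlerStr_of_bracket_eq {br : V6 →ₗ[ℝ] V6 →ₗ[ℝ] V6} {J : V6 →ₗ[ℝ] V6}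
    {g : V6 →ₗ[ℝ] V6 →ₗ[ℝ] ℝ} (hJ : ∀ x, J (J x) = -x) (hsym : ∀ x y, g x y = g y x)
    (hpos : ∀ x, x ≠ 0 → 0 < g x x) (hgJ : ∀ x y, g (J x) (J y) = g x y)
    {e : V6} {A B : V6 →ₗ[ℝ] V6} {a : ℝ}
    (hbr : ∀ x y, br x y = g x e • A y - g y e • A x)
    (hA : ∀ y, A y = B y + (a * g y (J e)) • J e)
    (hBJ : ∀ y, B (J y) = J (B y)) (hB : ∀ x y, g (B x) y = -g x (B y)) :
    IsKahlerStr br J g := by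
  have hJg : ∀ x y, g (J x) y = -g x (J y) := fun x y => by
    rw [← hgJ (J x) y, hJ, map_neg, LinearMap.neg_apply]
  have hJe : ∀ y, g (J y) e = -g y (J e) := fun y => hJg y e
  refine ⟨⟨⟨hJ, fun x y => ?_⟩, hsym, hpos, hgJ⟩, fun x y z => ?_⟩
  · simp only [Nij, hbr, hJe, hA, hBJ, hgJ, map_sub, map_smul, hJ, map_add]
    module
  · have hJB : ∀ y z, g (J (B y)) z = g (J (B z)) y := fun y z => by
      rw [hJg (B y) z, hB, neg_neg, hBJ, hsym y]
    simp only [d2, fund, hbr, hA, map_sub, map_smul, map_add, hJ, LinearMap.sub_apply,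
      LinearMap.add_apply, LinearMap.smul_apply, smul_eq_mul, LinearMap.map_neg,
      LinearMap.neg_apply]
    rw [hJB z y, hJB z x, hJB y x, hsym e x, hsym e y, hsym e z]
    ring

/-- The hyperplane `eᗮ` is an abelian ideal (`bracket_eq`), and `ad_e` maps into it
(`ad_perp`). -/
structure IsHermitianFrame (br : V6 →ₗ[ℝ] V6 →ₗ[ℝ] V6) (J : V6 →ₗ[ℝ] V6)
    (g : V6 →ₗ[ℝ] V6 →ₗ[ℝ] ℝ) (e : V6) : Prop where
  herm : IsHermStr br J g
  norm_self : g e e = 1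
  bracket_eq : ∀ x y, br x y = g x e • br e y - g y e • br e x
  ad_perp : ∀ y, g (br e y) e = 0

def projPerp (J : V6 →ₗ[ℝ] V6) (g : V6 →ₗ[ℝ] V6 →ₗ[ℝ] ℝ) (e : V6) : V6 →ₗ[ℝ] V6 :=
  LinearMap.id - (g.flip e).smulRight e - (g.flip (J e)).smulRight (J e)

theorem projPerp_apply (J : V6 →ₗ[ℝ] V6) (g : V6 →ₗ[ℝ] V6 →ₗ[ℝ] ℝ) (e y : V6) :
    projPerp J g e y = y - g y e • e - g y (J e) • J e := rfl

theorem projPerp_eq_self {J : V6 →ₗ[ℝ] V6} {g : V6 →ₗ[ℝ] V6 →ₗ[ℝ] ℝ} {e u : V6}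
    (hu : g u e = 0) (hu' : g u (J e) = 0) : projPerp J g e u = u := by
  simp [projPerp_apply, hu, hu']

theorem g_projPerp_right {J : V6 →ₗ[ℝ] V6} {g : V6 →ₗ[ℝ] V6 →ₗ[ℝ] ℝ} {e u : V6}
    (hu : g u e = 0) (hu' : g u (J e) = 0) (y : V6) : g u (projPerp J g e y) = g u y := by
  simp [projPerp_apply, hu, hu']

theorem IsHermitianFrame.exists_of_isAlmostAbelian {br : V6 →ₗ[ℝ] V6 →ₗ[ℝ] V6}
    {J : V6 →ₗ[ℝ] V6} {g : V6 →ₗ[ℝ] V6 →ₗ[ℝ] ℝ} (hanti : ∀ x y, br x y = -br y x)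
    (haa : IsAlmostAbelian br) (hH : IsHermStr br J g) : ∃ e, IsHermitianFrame br J g e := by
  obtain ⟨h, hdim, habel, hideal⟩ := haa
  obtain ⟨e, hee, hmem⟩ := exists_unit_normal hH.2.1 hH.2.2.1 h (by simp [hdim])
  exact ⟨e, hH, hee, bracket_eq_of_abelian_ideal hanti habel hee hmem,
    ad_perp_of_ideal hanti hideal hee hmem⟩

namespace IsHermitianFrame

variable {br : V6 →ₗ[ℝ] V6 →ₗ[ℝ] V6} {J : V6 →ₗ[ℝ] V6} {g : V6 →ₗ[ℝ] V6 →ₗ[ℝ] ℝ} {e : V6}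

theorem J_J (hF : IsHermitianFrame br J g e) (x : V6) : J (J x) = -x := hF.herm.1.1 x

theorem g_comm (hF : IsHermitianFrame br J g e) (x y : V6) : g x y = g y x := hF.herm.2.1 x y

theorem g_pos (hF : IsHermitianFrame br J g e) {x : V6} (hx : x ≠ 0) : 0 < g x x :=
  hF.herm.2.2.1 x hx

theorem g_J_J (hF : IsHermitianFrame br J g e) (x y : V6) : g (J x) (J y) = g x y :=
  hF.herm.2.2.2 x y

theorem g_J_left (hF : IsHermitianFrame br J g e) (x y : V6) : g (J x) y = -g x (J y) := by
  rw [← hF.g_J_J (J x) y, hF.J_J, map_neg, LinearMap.neg_apply]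

theorem J_e_perp (hF : IsHermitianFrame br J g e) : g (J e) e = 0 := by
  have := hF.g_J_left e e
  rw [hF.g_comm e] at this
  linarith

theorem norm_J_e (hF : IsHermitianFrame br J g e) : g (J e) (J e) = 1 := by
  rw [hF.g_J_J, hF.norm_self]

theorem J_perp_e (hF : IsHermitianFrame br J g e) {u : V6} (hu' : g u (J e) = 0) :
    g (J u) e = 0 := by
  rw [hF.g_J_left, hu', neg_zero]

theorem ad_self (hF : IsHermitianFrame br J g e) : br e e = 0 := by
  simpa using hF.bracket_eq e e

theorem bracket_eq_zero (hF : IsHermitianFrame br J g e) {x y : V6} (hx : g x e = 0)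
    (hy : g y e = 0) : br x y = 0 := by
  simp [hF.bracket_eq x y, hx, hy]

theorem bracket_e_right (hF : IsHermitianFrame br J g e) (x : V6) : br x e = -br e x := by
  simp [hF.bracket_eq x e, hF.norm_self, hF.ad_self]

theorem d2_eq_zero_of_perp (hF : IsHermitianFrame br J g e) (ω : V6 →ₗ[ℝ] V6 →ₗ[ℝ] ℝ)
    {x y z : V6} (hx : g x e = 0) (hy : g y e = 0) (hz : g z e = 0) :
    d2 br (fun u w => ω u w) x y z = 0 := by
  simp [d2, hF.bracket_eq_zero hx hy, hF.bracket_eq_zero hx hz, hF.bracket_eq_zero hy hz]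

theorem dC_eq_zero_of_J_perp (hF : IsHermitianFrame br J g e) {x y z : V6}
    (hx : g (J x) e = 0) (hy : g (J y) e = 0) (hz : g (J z) e = 0) : dC br J g x y z = 0 :=
  hF.d2_eq_zero_of_perp (g ∘ₗ J) hx hy hz

/-- This is where integrability of `J` enters: `N_J(u, e) = 0`. -/
theorem ad_J (hF : IsHermitianFrame br J g e) {u : V6} (hu : g u e = 0)
    (hu' : g u (J e) = 0) : br e (J u) = J (br e u) := by
  have hN := hF.herm.1.2 u e
  rw [Nij, hF.bracket_eq_zero (hF.J_perp_e hu') hF.J_e_perp,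
    hF.bracket_eq_zero hu hF.J_e_perp, hF.bracket_e_right, hF.bracket_e_right, map_neg,
    map_zero] at hN
  have := congrArg J hN
  simp only [map_sub, map_neg, map_zero, hF.J_J] at this
  linear_combination (norm := module) -this

theorem ad_perp_J_e (hF : IsHermitianFrame br J g e) {u : V6} (hu : g u e = 0)
    (hu' : g u (J e) = 0) : g (br e u) (J e) = 0 := by
  have : br e u = -J (br e (J u)) := by rw [hF.ad_J hu hu', hF.J_J, neg_neg]
  rw [this, map_neg, LinearMap.neg_apply, hF.g_J_J, hF.ad_perp, neg_zero]

theorem g_projPerp_e (hF : IsHermitianFrame br J g e) (y : V6) :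
    g (projPerp J g e y) e = 0 := by
  simp [projPerp_apply, hF.norm_self, hF.J_e_perp]

theorem g_projPerp_J_e (hF : IsHermitianFrame br J g e) (y : V6) :
    g (projPerp J g e y) (J e) = 0 := by
  simp [projPerp_apply, hF.norm_J_e, hF.g_comm e (J e), hF.J_e_perp]

theorem projPerp_J (hF : IsHermitianFrame br J g e) (y : V6) :
    projPerp J g e (J y) = J (projPerp J g e y) := by
  simp only [projPerp_apply, map_sub, map_smul, hF.J_J, hF.g_J_left y, map_neg]
  module

theorem ad_eq_ad_projPerp (hF : IsHermitianFrame br J g e) (y : V6) :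
    br e y = br e (projPerp J g e y) + g y (J e) • br e (J e) := by
  simp [projPerp_apply, hF.ad_self]

theorem ad_projPerp_J (hF : IsHermitianFrame br J g e) (y : V6) :
    br e (projPerp J g e (J y)) = J (br e (projPerp J g e y)) := by
  rw [hF.projPerp_J, hF.ad_J (hF.g_projPerp_e y) (hF.g_projPerp_J_e y)]

theorem ad_perp_J_e_projPerp (hF : IsHermitianFrame br J g e) (y : V6) :
    g (br e (projPerp J g e y)) (J e) = 0 :=
  hF.ad_perp_J_e (hF.g_projPerp_e y) (hF.g_projPerp_J_e y)

section Exact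

variable {η : V6 →ₗ[ℝ] V6 →ₗ[ℝ] ℝ}

theorem dC_eq_zero_of_perp (hF : IsHermitianFrame br J g e)
    (hη : ∀ x y z, d2 br (fun u w => η u w) x y z = dC br J g x y z) {x y z : V6}
    (hx : g x e = 0) (hy : g y e = 0) (hz : g z e = 0) : dC br J g x y z = 0 := by
  rw [← hη, hF.d2_eq_zero_of_perp η hx hy hz]

theorem J_ad_symm (hF : IsHermitianFrame br J g e)
    (hη : ∀ x y z, d2 br (fun u w => η u w) x y z = dC br J g x y z) {p q : V6}
    (hp : g p e = 0) (hp' : g p (J e) = 0) (hq : g q e = 0) (hq' : g q (J e) = 0) :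
    g (J (br e p)) q = g (J (br e q)) p := by
  have hperp : ∀ {u}, g u (J e) = 0 → g (-J u) e = 0 := fun hu => by
    rw [map_neg, LinearMap.neg_apply, hF.J_perp_e hu, neg_zero]
  have h0 := hF.dC_eq_zero_of_perp hη (hperp hp') (hperp hq')
    (hperp (by rw [hF.g_comm]; exact hF.J_e_perp))
  simp only [dC, map_neg, hF.J_J, neg_neg, d2, fund, hF.bracket_eq_zero hp hq,
    hF.bracket_e_right, map_zero, LinearMap.zero_apply, LinearMap.neg_apply] at h0
  linarith

theorem ad_skew (hF : IsHermitianFrame br J g e)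
    (hη : ∀ x y z, d2 br (fun u w => η u w) x y z = dC br J g x y z) {p q : V6}
    (hp : g p e = 0) (hp' : g p (J e) = 0) (hq : g q e = 0) (hq' : g q (J e) = 0) :
    g (br e p) q = -g p (br e q) := by
  have hJq' : g (J q) (J e) = 0 := by rw [hF.g_J_J, hq]
  rw [← hF.g_J_J, hF.J_ad_symm hη hp hp' (hF.J_perp_e hq') hJq', hF.ad_J hq hq', hF.J_J,
    map_neg, LinearMap.neg_apply, hF.g_comm]

theorem ad_projPerp_skew (hF : IsHermitianFrame br J g e)
    (hη : ∀ x y z, d2 br (fun u w => η u w) x y z = dC br J g x y z) (x y : V6) :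
    g (br e (projPerp J g e x)) y = -g x (br e (projPerp J g e y)) := by
  rw [← g_projPerp_right (hF.ad_perp _) (hF.ad_perp_J_e_projPerp x) y,
    hF.ad_skew hη (hF.g_projPerp_e x) (hF.g_projPerp_J_e x) (hF.g_projPerp_e y)
      (hF.g_projPerp_J_e y),
    hF.g_comm (projPerp J g e x), g_projPerp_right (hF.ad_perp _) (hF.ad_perp_J_e_projPerp y),
    hF.g_comm]

theorem eta_ad_symm (hF : IsHermitianFrame br J g e)
    (hη : ∀ x y z, d2 br (fun u w => η u w) x y z = dC br J g x y z) {u z : V6}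
    (hu : g u e = 0) (hu' : g u (J e) = 0) (hz : g z e = 0) (hz' : g z (J e) = 0) :
    η (br e u) z = η (br e z) u := by
  have h0 := hη u z e
  rw [hF.dC_eq_zero_of_J_perp (hF.J_perp_e hu') (hF.J_perp_e hz') hF.J_e_perp] at h0
  simp only [d2, hF.bracket_eq_zero hu hz, hF.bracket_e_right, map_zero, map_neg,
    LinearMap.zero_apply, LinearMap.neg_apply] at h0
  linarith

theorem eta_ad_J_e (hF : IsHermitianFrame br J g e)
    (hη : ∀ x y z, d2 br (fun u w => η u w) x y z = dC br J g x y z) {z : V6}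
    (hz : g z e = 0) (hz' : g z (J e) = 0) (hAz : br e z = 0) :
    η (br e (J e)) z = g (br e (J e)) z := by
  have h0 := hη z (J e) e
  simp only [dC, d2, fund, hF.J_J, map_neg, LinearMap.neg_apply, hF.bracket_e_right,
    hF.bracket_eq_zero hz hF.J_e_perp, hF.bracket_eq_zero (hF.J_perp_e hz') hF.J_e_perp,
    hF.ad_J hz hz', hAz, map_zero, LinearMap.zero_apply, hF.g_J_J] at h0
  linarith

/-- Split `A (J e) = A u + z` with `A z = 0`, using skewness of `A ∘ projPerp`;
then `|z|² = g(A (J e), z) = η(A (J e), z) = η(A z, u) = 0`. -/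
theorem exists_perp_ad_eq_ad_J_e (hF : IsHermitianFrame br J g e)
    (hηa : ∀ x y, η x y = -η y x)
    (hη : ∀ x y z, d2 br (fun u w => η u w) x y z = dC br J g x y z)
    (ha : g (br e (J e)) (J e) = 0) :
    ∃ u, g u e = 0 ∧ g u (J e) = 0 ∧ br e u = br e (J e) := by
  set B := br e ∘ₗ projPerp J g e
  have hv : br e (J e) ∈ LinearMap.range B ⊔ LinearMap.ker B := by
    rw [range_sup_ker_eq_top_of_skew (fun _ => hF.g_pos) (hF.ad_projPerp_skew hη)]
    trivial
  obtain ⟨_, ⟨u₀, rfl⟩, z, hz, hvz⟩ := Submodule.mem_sup.1 hv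
  set u := projPerp J g e u₀
  have hu := hF.g_projPerp_e u₀
  have hu' := hF.g_projPerp_J_e u₀
  have hvz : br e u + z = br e (J e) := hvz
  have hze : g z e = 0 := by
    rw [← add_sub_cancel_left (br e u) z, hvz, map_sub, LinearMap.sub_apply, hF.ad_perp,
      hF.ad_perp, sub_zero]
  have hzJ : g z (J e) = 0 := by
    rw [← add_sub_cancel_left (br e u) z, hvz, map_sub, LinearMap.sub_apply, ha,
      hF.ad_perp_J_e hu hu', sub_zero]
  have hAz : br e z = 0 := by
    rw [← projPerp_eq_self hze hzJ]
    exact hz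
  have hzz : g z z = 0 := by
    have hη_vz : η (br e (J e)) z = 0 := by
      rw [← hvz, map_add, LinearMap.add_apply, hF.eta_ad_symm hη hu hu' hze hzJ, hAz,
        self_eq_neg.1 (hηa z z), map_zero, LinearMap.zero_apply, zero_add]
    rwa [hF.eta_ad_J_e hη hze hzJ hAz, ← hvz, map_add, LinearMap.add_apply,
      hF.ad_skew hη hu hu' hze hzJ, hAz, map_zero, neg_zero, zero_add] at hη_vz
  have hz0 : z = 0 := by
    by_contra hne
    exact (hF.g_pos hne).ne' hzz
  exact ⟨u, hu, hu', by rw [← hvz, hz0, add_zero]⟩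

theorem exists_perp_smul_sub_ad_eq (hF : IsHermitianFrame br J g e)
    (hη : ∀ x y z, d2 br (fun u w => η u w) x y z = dC br J g x y z) {a : ℝ} (ha : a ≠ 0)
    {v : V6} (hv : g v e = 0) (hv' : g v (J e) = 0) :
    ∃ w, g w e = 0 ∧ g w (J e) = 0 ∧ a • w - br e w = v := by
  obtain ⟨w, hw⟩ := surjective_smul_sub_of_skew (B := br e ∘ₗ projPerp J g e)
    (fun _ => hF.g_pos) (hF.ad_projPerp_skew hη) ha v
  have hw : a • w - br e (projPerp J g e w) = v := hw
  have hperp : ∀ f, g (br e (projPerp J g e w)) f = 0 → g v f = 0 → g w f = 0 := by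
    intro f hAf hvf
    have := congrArg (fun y => g y f) hw
    simp only [map_sub, map_smul, LinearMap.sub_apply, LinearMap.smul_apply, smul_eq_mul, hAf,
      hvf, sub_zero] at this
    exact (mul_eq_zero.1 this).resolve_left ha
  have hwe := hperp e (hF.ad_perp _) hv
  have hwJ := hperp (J e) (hF.ad_perp_J_e_projPerp w) hv'
  exact ⟨w, hwe, hwJ, by rwa [projPerp_eq_self hwe hwJ] at hw⟩

theorem exists_eigenvector (hF : IsHermitianFrame br J g e)
    (hηa : ∀ x y, η x y = -η y x)
    (hη : ∀ x y z, d2 br (fun u w => η u w) x y z = dC br J g x y z) :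
    ∃ w, g w e = 0 ∧ g w (J e) = 0 ∧
      br e (J e + w) = g (br e (J e)) (J e) • (J e + w) := by
  set a := g (br e (J e)) (J e)
  rcases eq_or_ne a 0 with ha | ha
  · obtain ⟨u, hu, hu', hAu⟩ := hF.exists_perp_ad_eq_ad_J_e hηa hη ha
    refine ⟨-u, by simp [hu], by simp [hu'], ?_⟩
    rw [ha, zero_smul, map_add, map_neg, hAu, add_neg_cancel]
  · obtain ⟨w, hw, hw', hAw⟩ := hF.exists_perp_smul_sub_ad_eq hη ha
      (v := br e (J e) - a • J e) (by simp [hF.ad_perp, hF.J_e_perp])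
      (by simp [a, hF.norm_J_e])
    refine ⟨w, hw, hw', ?_⟩
    rw [map_add]
    linear_combination (norm := module) -hAw

end Exact

theorem ad_eq_conj_add (hF : IsHermitianFrame br J g e) {w : V6} (hw : g w e = 0)
    (hw' : g w (J e) = 0) {a : ℝ} (hAw : br e (J e + w) = a • (J e + w)) {φ : V6 ≃ₗ[ℝ] V6}
    (hφ : ∀ x, φ x = x + g x (J e) • w) (hφ_symm : ∀ x, φ.symm x = x - g x (J e) • w)
    (y : V6) : br e y = φ.conj (br e ∘ₗ projPerp J g e) y + (a * g y (J e)) • (J e + w) := by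
  rw [hF.ad_eq_ad_projPerp y, LinearEquiv.conj_apply_apply, hφ_symm, hφ]
  simp only [LinearMap.comp_apply, map_sub, map_smul, projPerp_eq_self hw hw',
    LinearMap.sub_apply, LinearMap.smul_apply, smul_eq_mul, hF.ad_perp_J_e_projPerp,
    hF.ad_perp_J_e hw hw', mul_zero, sub_zero, zero_smul, add_zero]
  rw [map_add] at hAw
  linear_combination (norm := module) g y (J e) • hAw

/-- Conjugating by the transvection `x ↦ x + g(x, J e) w` turns `J e` into the eigenvector
`J e + w` of `ad_e`, without changing `g(·, e)`. -/
theorem exists_isKahlerStr (hF : IsHermitianFrame br J g e)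
    (hskew : ∀ x y, g (br e (projPerp J g e x)) y = -g x (br e (projPerp J g e y)))
    {w : V6} (hw : g w e = 0) (hw' : g w (J e) = 0) {a : ℝ}
    (hAw : br e (J e + w) = a • (J e + w)) :
    ∃ (J' : V6 →ₗ[ℝ] V6) (g' : V6 →ₗ[ℝ] V6 →ₗ[ℝ] ℝ), IsKahlerStr br J' g' := by
  obtain ⟨φ, hφ, hφ_symm⟩ : ∃ φ : V6 ≃ₗ[ℝ] V6,
      (∀ x, φ x = x + g x (J e) • w) ∧ ∀ x, φ.symm x = x - g x (J e) • w :=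
    ⟨LinearEquiv.transvection (f := g.flip (J e)) hw', fun _ => rfl,
      LinearEquiv.transvection_symm_apply (f := g.flip (J e)) hw'⟩
  have hφ_e : φ.symm e = e := by simp [hφ_symm, hF.g_comm e (J e), hF.J_e_perp]
  have hJ'e : φ.conj J e = J e + w := by simp [hφ_e, hφ, hF.norm_J_e]
  have hφ_J'e : φ.symm (φ.conj J e) = J e := by simp [hφ_e]
  refine ⟨φ.conj J, g.compl₁₂ φ.symm.toLinearMap φ.symm.toLinearMap,
    isKahlerStr_of_bracket_eq (e := e) (A := br e) (B := φ.conj (br e ∘ₗ projPerp J g e))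
      (a := a) (fun x => by simp [hF.J_J]) (fun x y => hF.g_comm _ _)
      (fun x hx => hF.g_pos (by simpa using hx)) (fun x y => by simp [hF.g_J_J])
      (fun x y => ?_) (fun y => ?_) (fun y => by simp [hF.ad_projPerp_J])
      (fun x y => by simpa using hskew _ _)⟩
  · have hge (x : V6) : g (φ.symm x) e = g x e := by simp [hφ_symm, hw]
    simpa [hφ_e, hge] using hF.bracket_eq x y
  · have hg' : g (φ.symm y) (J e) = g y (J e) := by simp [hφ_symm, hw']
    rw [LinearMap.compl₁₂_apply, LinearEquiv.coe_coe, hφ_J'e, hg', hJ'e]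
    exact hF.ad_eq_conj_add hw hw' hAw hφ hφ_symm y

end IsHermitianFrame

theorem stmt_8_general (br : V6 →ₗ[ℝ] V6 →ₗ[ℝ] V6) (hbr : IsBracket br)
    (haa : IsAlmostAbelian br)
    (J : V6 →ₗ[ℝ] V6) (g : V6 →ₗ[ℝ] V6 →ₗ[ℝ] ℝ) (hskt : IsSKTStr br J g)
    (hnk : ¬ ∃ (J' : V6 →ₗ[ℝ] V6) (g' : V6 →ₗ[ℝ] V6 →ₗ[ℝ] ℝ), IsKahlerStr br J' g') :
    ¬ ∃ η : V6 →ₗ[ℝ] V6 →ₗ[ℝ] ℝ, (∀ x y, η x y = - η y x) ∧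
        (∀ x y z, d2 br (fun u w => η u w) x y z = dC br J g x y z) := by
  rintro ⟨η, hηa, hη⟩
  obtain ⟨e, hF⟩ := IsHermitianFrame.exists_of_isAlmostAbelian hbr.1 haa hskt.1
  obtain ⟨w, hw, hw', hAw⟩ := hF.exists_eigenvector hηa hη
  exact hnk (hF.exists_isKahlerStr (hF.ad_projPerp_skew hη) hw hw' hAw)

/-- On a six-dimensional SKT non-nilpotent almost abelian Lie algebra admitting no
Kähler structure, the torsion 3-form `H = dᶜω` is not exact. -/
theorem stmt_8 (br : V6 →ₗ[ℝ] V6 →ₗ[ℝ] V6) (hbr : IsBracket br)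
    (haa : IsAlmostAbelian br) (hnn : ¬ IsNilpotentBr br)
    (J : V6 →ₗ[ℝ] V6) (g : V6 →ₗ[ℝ] V6 →ₗ[ℝ] ℝ) (hskt : IsSKTStr br J g)
    (hnk : ¬ ∃ (J' : V6 →ₗ[ℝ] V6) (g' : V6 →ₗ[ℝ] V6 →ₗ[ℝ] ℝ), IsKahlerStr br J' g') :
    ¬ ∃ η : V6 →ₗ[ℝ] V6 →ₗ[ℝ] ℝ, (∀ x y, η x y = - η y x) ∧
        (∀ x y z, d2 br (fun u w => η u w) x y z = dC br J g x y z) :=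
  stmt_8_general br hbr haa J g hskt hnk
end
end

section
/- Let 𝔤 = 𝔨₂₃⁰ be the six-dimensional real Lie algebra with basis f₁,…,f₆ and nonzero brackets [f₆,f₁] = -f₂, [f₆,f₂] = f₁, [f₆,f₄] = f₃. Then 𝔤 admits no generalized Kähler structure: there exists no triple (J₊,J₋,g) with (J₊,g) and (J₋,g) Hermitian structures satisfying dᶜ₊ω₊ + dᶜ₋ω₋ = 0 and d(dᶜ₊ω₊) = 0. -/
noncomputable section

/-- The Lie algebra `𝔨₂₃^p`. -/
def k23 (p : ℝ) : V6 →ₗ[ℝ] V6 →ₗ[ℝ] V6 :=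
  braa !![p,1,0,0,0,0; -1,p,0,0,0,0; 0,0,0,1,0,0; 0,0,0,0,0,0; 0,0,0,0,0,0; 0,0,0,0,0,0]

/-!
Write `𝔤 = ℝ f₆ ⋉ 𝔫` with `𝔫 = span {f₁, …, f₅}` abelian and `A = ad f₆`. For `x, y ∈ 𝔫` the
Nijenhuis tensor of `J` is `λ(x) [A, J] y - λ(y) [A, J] x`, where `λ = f⁶ ∘ J`. Comparing its
components shows that `λ` vanishes on `span {f₁, f₂, f₃, f₅}` but not at `f₄`, so `J` commutes
with `A` there: `J f₁ = ±f₂`, `J` preserves the centre `span {f₃, f₅}`, and the `(f₄, f₆)`-block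
of `J` has determinant `1`.

The SKT condition for `J₊`, evaluated at `(f₁, f₃, f₄, f₆)` and `(f₂, f₃, f₄, f₆)`, forces
`f₁, f₂ ⟂ f₃`. Then `dᶜω(f₃, f₄, f₆) = g(f₃, f₃)` for both `J₊` and `J₋`, which is incompatible
with `dᶜ₊ω₊ + dᶜ₋ω₋ = 0`. Indices are shifted by one: `e i` is `f_{i+1}`.
-/

open Matrix

namespace K23

abbrev e (i : Fin 6) : V6 := Pi.single i 1

lemma apply_eq_sum (J : V6 →ₗ[ℝ] V6) (v : V6) (i : Fin 6) :
    J v i = ∑ k, v k * J (e k) i := by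
  rw [← LinearMap.toMatrix'_mulVec, Matrix.mulVec, dotProduct]
  simp [LinearMap.toMatrix'_apply, mul_comm]

lemma dC_eq (br : V6 →ₗ[ℝ] V6 →ₗ[ℝ] V6) (J : V6 →ₗ[ℝ] V6) (g : V6 →ₗ[ℝ] V6 →ₗ[ℝ] ℝ)
    (hinv : ∀ x y, g (J x) (J y) = g x y) (x y z : V6) :
    dC br J g x y z =
      -g (br (J x) (J y)) z + g (br (J x) (J z)) y - g (br (J y) (J z)) x := by
  simp only [dC, d2, fund, hinv]

section AlmostAbelian

variable (A : Matrix (Fin 6) (Fin 6) ℝ) (J : V6 →ₗ[ℝ] V6)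

lemma braa_apply (x y : V6) : braa A x y = x 5 • A *ᵥ y - y 5 • A *ᵥ x := rfl

lemma nij_braa {x y : V6} (hx : x 5 = 0) (hy : y 5 = 0) :
    Nij (braa A) J x y = J x 5 • ⁅toLin' A, J⁆ y - J y 5 • ⁅toLin' A, J⁆ x := by
  simp only [Nij, braa_apply, hx, hy, Ring.lie_def, LinearMap.sub_apply, Module.End.mul_apply,
    toLin'_apply, zero_smul, sub_zero, zero_sub, map_smul, map_neg, smul_sub]
  module

end AlmostAbelian

def adF6 : Matrix (Fin 6) (Fin 6) ℝ :=
  !![0,1,0,0,0,0; -1,0,0,0,0,0; 0,0,0,1,0,0; 0,0,0,0,0,0; 0,0,0,0,0,0; 0,0,0,0,0,0]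

lemma k23_zero : k23 0 = braa adF6 := rfl

lemma adF6_mulVec (v : V6) : adF6 *ᵥ v = v 1 • e 0 - v 0 • e 1 + v 3 • e 2 := by
  ext i
  fin_cases i <;> simp [adF6, Matrix.mulVec, dotProduct, Fin.sum_univ_six]

lemma k23_zero_apply (x y : V6) :
    k23 0 x y = x 5 • (y 1 • e 0 - y 0 • e 1 + y 3 • e 2) -
      y 5 • (x 1 • e 0 - x 0 • e 1 + x 3 • e 2) := by
  rw [k23_zero, braa_apply, adF6_mulVec, adF6_mulVec]

lemma lie_adF6_apply (J : V6 →ₗ[ℝ] V6) (y : V6) :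
    ⁅toLin' adF6, J⁆ y = (J y 1 • e 0 - J y 0 • e 1 + J y 3 • e 2) -
      (y 1 • J (e 0) - y 0 • J (e 1) + y 3 • J (e 2)) := by
  simp only [Ring.lie_def, LinearMap.sub_apply, Module.End.mul_apply, toLin'_apply, adF6_mulVec,
    map_add, map_sub, map_smul]

lemma apply_e_one_zero_three_eq_zero_of_lie_eq_zero {J : V6 →ₗ[ℝ] V6} {k : Fin 6}
    (hk : k = 2 ∨ k = 4) (hC : ⁅toLin' adF6, J⁆ (e k) = 0) :
    J (e k) 1 = 0 ∧ J (e k) 0 = 0 ∧ J (e k) 3 = 0 := by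
  rcases hk with rfl | rfl <;> simpa [lie_adF6_apply, funext_iff, Fin.forall_fin_succ] using hC

section ComplexStructure

variable {J : V6 →ₗ[ℝ] V6}

lemma smul_lie_comm (hJ : IsCpxStr (k23 0) J) {x y : V6} (hx : x 5 = 0) (hy : y 5 = 0) :
    J x 5 • ⁅toLin' adF6, J⁆ y = J y 5 • ⁅toLin' adF6, J⁆ x := by
  have h := hJ.2 x y
  rwa [k23_zero, nij_braa _ _ hx hy, sub_eq_zero] at h

lemma smul_lie_comm_apply (hJ : IsCpxStr (k23 0) J) (j k i : Fin 6) (hj : j ≠ 5)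
    (hk : k ≠ 5) :
    J (e j) 5 * ⁅toLin' adF6, J⁆ (e k) i = J (e k) 5 * ⁅toLin' adF6, J⁆ (e j) i := by
  simpa using
    congrFun (smul_lie_comm hJ (x := e j) (y := e k) (by simp [hj.symm]) (by simp [hk.symm])) i

lemma lie_adF6_eq_zero_of_apply_five_eq_zero (hJ : IsCpxStr (k23 0) J) {x y : V6}
    (hx : x 5 = 0) (hy : y 5 = 0) (hJx : J x 5 = 0) (hJy : J y 5 ≠ 0) :
    ⁅toLin' adF6, J⁆ x = 0 := by
  have h := smul_lie_comm hJ hx hy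
  rw [hJx, zero_smul, eq_comm, smul_eq_zero] at h
  exact h.resolve_left hJy

lemma apply_e_zero_one_five_eq_zero (hJ : IsCpxStr (k23 0) J) :
    J (e 0) 5 = 0 ∧ J (e 1) 5 = 0 := by
  have h : -(J (e 0) 5 * J (e 0) 5) = J (e 1) 5 * J (e 1) 5 := by
    simpa [lie_adF6_apply] using smul_lie_comm_apply hJ 0 1 5 (by decide) (by decide)
  constructor <;> nlinarith [mul_self_nonneg (J (e 0) 5), mul_self_nonneg (J (e 1) 5)]

lemma apply_e_two_five_eq_zero (hJ : IsCpxStr (k23 0) J) : J (e 2) 5 = 0 := by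
  simpa [lie_adF6_apply] using smul_lie_comm_apply hJ 2 3 5 (by decide) (by decide)

lemma apply_e_four_five_eq_zero (hJ : IsCpxStr (k23 0) J) : J (e 4) 5 = 0 := by
  by_contra h4
  have h25 := apply_e_two_five_eq_zero hJ
  obtain ⟨h21, h20, h23⟩ := apply_e_one_zero_three_eq_zero_of_lie_eq_zero (.inl rfl)
    (lie_adF6_eq_zero_of_apply_five_eq_zero hJ (y := e 4) (by simp) (by simp) h25 h4)
  have h24 : J (e 2) 4 = 0 := by
    simpa [lie_adF6_apply, h25, h4] using smul_lie_comm_apply hJ 3 4 4 (by decide) (by decide)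
  -- `span {e 2}` would be `J`-invariant
  have hsq : J (e 2) 2 * J (e 2) 2 = -1 := by
    simpa [apply_eq_sum J (J (e 2)), Fin.sum_univ_six, h20, h21, h23, h24, h25] using
      congrFun (hJ.1 (e 2)) 2
  nlinarith [mul_self_nonneg (J (e 2) 2)]

lemma apply_e_three_five_ne_zero (hJ : IsCpxStr (k23 0) J) : J (e 3) 5 ≠ 0 := by
  intro h3
  have hsq : J (e 5) 5 * J (e 5) 5 = -1 := by
    simpa [apply_eq_sum J (J (e 5)), Fin.sum_univ_six, h3, apply_e_zero_one_five_eq_zero hJ,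
      apply_e_two_five_eq_zero hJ, apply_e_four_five_eq_zero hJ] using congrFun (hJ.1 (e 5)) 5
  nlinarith [mul_self_nonneg (J (e 5) 5)]

lemma apply_e_five_eq_zero (hJ : IsCpxStr (k23 0) J) {k : Fin 6} (h3 : k ≠ 3) (h5 : k ≠ 5) :
    J (e k) 5 = 0 := by
  fin_cases k
  · exact (apply_e_zero_one_five_eq_zero hJ).1
  · exact (apply_e_zero_one_five_eq_zero hJ).2
  · exact apply_e_two_five_eq_zero hJ
  · exact absurd rfl h3
  · exact apply_e_four_five_eq_zero hJ
  · exact absurd rfl h5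

lemma lie_adF6_apply_e_eq_zero (hJ : IsCpxStr (k23 0) J) {k : Fin 6} (h3 : k ≠ 3)
    (h5 : k ≠ 5) : ⁅toLin' adF6, J⁆ (e k) = 0 :=
  lie_adF6_eq_zero_of_apply_five_eq_zero hJ (y := e 3) (by simp [h5.symm]) (by simp)
    (apply_e_five_eq_zero hJ h3 h5) (apply_e_three_five_ne_zero hJ)

lemma exists_apply_e_zero_one_eq_rotation (hJ : IsCpxStr (k23 0) J) :
    ∃ a b : ℝ, J (e 0) = a • e 0 + b • e 1 ∧ J (e 1) = -b • e 0 + a • e 1 := by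
  have hC0 := lie_adF6_apply_e_eq_zero hJ (k := 0) (by decide) (by decide)
  have hC1 := lie_adF6_apply_e_eq_zero hJ (k := 1) (by decide) (by decide)
  simp [lie_adF6_apply, funext_iff, Fin.forall_fin_succ] at hC0 hC1
  refine ⟨J (e 0) 0, J (e 0) 1, ?_, ?_⟩ <;> ext i <;> fin_cases i <;> simp <;> linarith

lemma exists_apply_e_zero_one (hJ : IsCpxStr (k23 0) J) :
    ∃ b : ℝ, b ^ 2 = 1 ∧ J (e 0) = b • e 1 ∧ J (e 1) = -b • e 0 := by
  obtain ⟨a, b, h0, h1⟩ := exists_apply_e_zero_one_eq_rotation hJ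
  have hsq0 : a * a + -(b * b) = -1 := by simpa [h0, h1] using congrFun (hJ.1 (e 0)) 0
  have hsq1 : a * b + b * a = 0 := by simpa [h0, h1] using congrFun (hJ.1 (e 0)) 1
  have ha : a = 0 := by
    have h : a * a * (1 + a * a) = 0 := by
      linear_combination (a * b / 2) * hsq1 + a * a * hsq0
    refine mul_self_eq_zero.mp ((mul_eq_zero.mp h).resolve_right ?_)
    exact (add_pos_of_pos_of_nonneg one_pos (mul_self_nonneg a)).ne'
  refine ⟨b, by linear_combination -hsq0 + a * ha, ?_, ?_⟩
  · rw [h0, ha, zero_smul, zero_add]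
  · rw [h1, ha, zero_smul, add_zero]

lemma exists_apply_e_center (hJ : IsCpxStr (k23 0) J) {k : Fin 6} (hk : k = 2 ∨ k = 4) :
    ∃ c d : ℝ, J (e k) = c • e 2 + d • e 4 := by
  have hk3 : k ≠ 3 := by rcases hk with rfl | rfl <;> decide
  have hk5 : k ≠ 5 := by rcases hk with rfl | rfl <;> decide
  obtain ⟨h1, h0, h3⟩ :=
    apply_e_one_zero_three_eq_zero_of_lie_eq_zero hk (lie_adF6_apply_e_eq_zero hJ hk3 hk5)
  have h5 := apply_e_five_eq_zero hJ hk3 hk5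
  refine ⟨J (e k) 2, J (e k) 4, ?_⟩
  ext i
  fin_cases i <;> simp [h0, h1, h3, h5]

lemma apply_e_three_five_block_det (hJ : IsCpxStr (k23 0) J) :
    J (e 3) 3 * J (e 5) 5 - J (e 5) 3 * J (e 3) 5 = 1 := by
  obtain ⟨b, -, h0, h1⟩ := exists_apply_e_zero_one hJ
  obtain ⟨c, d, h2⟩ := exists_apply_e_center hJ (k := 2) (.inl rfl)
  obtain ⟨c', d', h4⟩ := exists_apply_e_center hJ (k := 4) (.inr rfl)
  have h33 : J (e 3) 3 * J (e 3) 3 + J (e 3) 5 * J (e 5) 3 = -1 := by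
    simpa [apply_eq_sum J (J (e 3)), Fin.sum_univ_six, h0, h1, h2, h4] using
      congrFun (hJ.1 (e 3)) 3
  have h35 : J (e 3) 3 * J (e 3) 5 + J (e 3) 5 * J (e 5) 5 = 0 := by
    simpa [apply_eq_sum J (J (e 3)), Fin.sum_univ_six, h0, h1, h2, h4] using
      congrFun (hJ.1 (e 3)) 5
  have h55 : J (e 5) 5 = -J (e 3) 3 :=
    mul_left_cancel₀ (apply_e_three_five_ne_zero hJ) (by linear_combination h35)
  linear_combination -h33 + J (e 3) 3 * h55

end ComplexStructure

variable {J : V6 →ₗ[ℝ] V6} {g : V6 →ₗ[ℝ] V6 →ₗ[ℝ] ℝ}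

lemma orthogonal_e_two_of_skt (hJ : IsCpxStr (k23 0) J) (hinv : ∀ x y, g (J x) (J y) = g x y)
    (hskt : ∀ x y z w, d3 (k23 0) (dC (k23 0) J g) x y z w = 0) :
    g (e 0) (e 2) = 0 ∧ g (e 1) (e 2) = 0 := by
  obtain ⟨b, hb, h0, h1⟩ := exists_apply_e_zero_one hJ
  obtain ⟨c, d, h2⟩ := exists_apply_e_center hJ (k := 2) (.inl rfl)
  have hb0 : b ≠ 0 := by rintro rfl; norm_num at hb
  -- the two instances reduce to `J (e 3) 5 * b * g (e i) (e 2) = 0` for `i = 1, 0`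
  constructor
  · simpa [d3, dC_eq _ _ _ hinv, k23_zero_apply, h0, h1, h2, apply_e_three_five_ne_zero hJ, hb0]
      using hskt (e 1) (e 2) (e 3) (e 5)
  · simpa [d3, dC_eq _ _ _ hinv, k23_zero_apply, h0, h1, h2, apply_e_three_five_ne_zero hJ, hb0]
      using hskt (e 0) (e 2) (e 3) (e 5)

lemma dC_e_two_e_three_e_five (hJ : IsCpxStr (k23 0) J) (hinv : ∀ x y, g (J x) (J y) = g x y)
    (h02 : g (e 0) (e 2) = 0) (h12 : g (e 1) (e 2) = 0) :
    dC (k23 0) J g (e 2) (e 3) (e 5) = g (e 2) (e 2) := by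
  obtain ⟨c, d, h2⟩ := exists_apply_e_center hJ (k := 2) (.inl rfl)
  simp [dC_eq _ _ _ hinv, k23_zero_apply, h2, h02, h12]
  linear_combination g (e 2) (e 2) * apply_e_three_five_block_det hJ

end K23

open K23

/-- The Lie algebra `𝔨₂₃⁰` admits no generalized Kähler structure. -/
theorem stmt_13 :
    ¬ ∃ (Jp Jm : V6 →ₗ[ℝ] V6) (g : V6 →ₗ[ℝ] V6 →ₗ[ℝ] ℝ),
      IsGenKahler (k23 0) Jp Jm g := by
  rintro ⟨Jp, Jm, g, ⟨hJp, -, hpos, hinvp⟩, ⟨hJm, -, -, hinvm⟩, hsum, hskt⟩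
  obtain ⟨h02, h12⟩ := orthogonal_e_two_of_skt hJp hinvp hskt
  have h := hsum (e 2) (e 3) (e 5)
  rw [dC_e_two_e_three_e_five hJp hinvp h02 h12, dC_e_two_e_three_e_five hJm hinvm h02 h12] at h
  linarith [hpos (e 2) (by simp)]
end
end

section
/- Let a₀ ∈ ℝ, let k ≥ 0 be a real number, let n be a natural number and A₀ ∈ M_n(ℝ). Define c(t) = (1 + a₀²(k/2 + 1)·t)^{-1/2} on the interval I = { t ∈ ℝ : 1 + a₀²(k/2+1)·t > 0 } (which contains [0,∞)), and set a(t) = a₀·c(t), A(t) = c(t)·A₀. Then a(0) = a₀, A(0) = A₀, and for every t ∈ I the derivatives exist and satisfy a′(t) = -(k/4 + 1/2)·a(t)³ and A′(t) = -(k/4 + 1/2)·a(t)²·A(t). (This is the explicit solution of the pluriclosed/bracket flow ODE system for almost abelian Lie groups with v₀ = 0, showing the corresponding generalized Kähler structures are expanding solitons.) -/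
/-- The explicit solution of the (gauged) pluriclosed bracket-flow ODE system on almost
abelian Lie groups with `v₀ = 0`: with `c(t) = (1 + a₀²(k/2+1)t)^{-1/2}`, the functions
`a(t) = a₀ c(t)` and `A(t) = c(t) A₀` satisfy `a' = -(k/4+1/2)a³` and
`A' = -(k/4+1/2)a²A` on the interval where `1 + a₀²(k/2+1)t > 0`, which contains
`[0,∞)`. -/
theorem stmt_17 (a₀ k : ℝ) (hk : 0 ≤ k) (n : ℕ) (A₀ : Matrix (Fin n) (Fin n) ℝ)
    (c : ℝ → ℝ) (hc : ∀ t, c t = (1 + a₀ ^ 2 * (k / 2 + 1) * t) ^ (-(1 : ℝ) / 2))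
    (a : ℝ → ℝ) (ha : ∀ t, a t = a₀ * c t)
    (A : ℝ → Matrix (Fin n) (Fin n) ℝ) (hA : ∀ t, A t = c t • A₀) :
    (∀ t : ℝ, 0 ≤ t → 0 < 1 + a₀ ^ 2 * (k / 2 + 1) * t) ∧
    a 0 = a₀ ∧ A 0 = A₀ ∧
    ∀ t : ℝ, 0 < 1 + a₀ ^ 2 * (k / 2 + 1) * t →
      HasDerivAt a (-(k / 4 + 1 / 2) * a t ^ 3) t ∧
      ∀ i j, HasDerivAt (fun u => A u i j) (-(k / 4 + 1 / 2) * a t ^ 2 * A t i j) t := by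
  have hb0 : 0 ≤ a₀ ^ 2 * (k / 2 + 1) := by positivity
  set b := a₀ ^ 2 * (k / 2 + 1) with hb
  have hc0 : c 0 = 1 := by rw [hc]; norm_num
  refine ⟨?_, ?_, ?_, ?_⟩
  · intro t ht; nlinarith
  · rw [ha, hc0, mul_one]
  · rw [hA, hc0, one_smul]
  · intro t ht
    have hderiv : HasDerivAt c (-(b / 2) * c t ^ 3) t := by
      have h1 : HasDerivAt (fun u => 1 + b * u) b t := by
        simpa using ((hasDerivAt_id t).const_mul b).const_add 1
      have h2 := h1.rpow_const (p := -(1 : ℝ) / 2) (Or.inl (ne_of_gt ht))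
      have heq : (fun u => (1 + b * u) ^ (-(1 : ℝ) / 2)) = c := by
        funext u; rw [hc]
      rw [heq] at h2
      have e1 : c t ^ 3 = (1 + b * t) ^ (-(3 : ℝ) / 2) := by
        rw [hc, ← Real.rpow_natCast ((1 + b * t) ^ (-(1 : ℝ) / 2)) 3,
          ← Real.rpow_mul ht.le]
        norm_num
      have e2 : (-(1 : ℝ) / 2 - 1) = -(3 : ℝ) / 2 := by norm_num
      rw [e2] at h2
      rw [e1]
      convert h2 using 1
      ring
    constructor
    · have h3 : HasDerivAt a (a₀ * (-(b / 2) * c t ^ 3)) t := by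
        have := hderiv.const_mul a₀
        have heq : (fun u => a₀ * c u) = a := by funext u; rw [ha]
        rwa [heq] at this
      convert h3 using 1
      rw [ha, hb]; ring
    · intro i j
      have h4 : HasDerivAt (fun u => A u i j) (-(b / 2) * c t ^ 3 * A₀ i j) t := by
        have := hderiv.mul_const (A₀ i j)
        have heq : (fun u => c u * A₀ i j) = fun u => A u i j := by
          funext u; rw [hA, Matrix.smul_apply, smul_eq_mul]
        rwa [heq] at this
      convert h4 using 1
      rw [ha, hA, Matrix.smul_apply, smul_eq_mul, hb]; ring
end

section
/- For every real number t₀ ≠ 0, the diagonal matrix D = diag(e^{t₀}, e^{-t₀/2}, e^{-t₀/2}, 1, 1, 1) ∈ GL(6,ℝ) is not conjugate in GL(6,ℝ) to any matrix with integer entries: there exist no P ∈ GL(6,ℝ) and N ∈ M₆(ℤ) with P⁻¹·D·P = N. (Consequently, by Milnor's criterion, the simply connected almost abelian Lie group with Lie algebra 𝔨₁₇^{-1/2} admits no lattice, hence no compact quotient.) -/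
lemma no_int_in_open01 (z : ℤ) (h0 : (0:ℝ) < z) (h1 : (z:ℝ) < 1) : False := by
  have : (0:ℤ) < z := by exact_mod_cast h0
  have : z < 1 := by exact_mod_cast h1
  omega

/-- For `t₀ ≠ 0`, the matrix `exp(t₀ ad_{f₆})` of `𝔨₁₇^{-1/2}` is not conjugate to an
integer matrix; hence the corresponding simply connected Lie group has no lattice. -/
theorem stmt_18 (t₀ : ℝ) (ht : t₀ ≠ 0) :
    ¬ ∃ (P : Matrix (Fin 6) (Fin 6) ℝ) (N : Matrix (Fin 6) (Fin 6) ℤ),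
      IsUnit P ∧
        P⁻¹ * Matrix.diagonal
            ![Real.exp t₀, Real.exp (-t₀ / 2), Real.exp (-t₀ / 2), 1, 1, 1] * P
          = N.map (fun z => (z : ℝ)) := by
  rintro ⟨P, N, hP, hN⟩
  set v : Fin 6 → ℝ := ![Real.exp t₀, Real.exp (-t₀ / 2), Real.exp (-t₀ / 2), 1, 1, 1] with hv
  set D : Matrix (Fin 6) (Fin 6) ℝ := Matrix.diagonal v with hD
  have hPdet : IsUnit P.det := (Matrix.isUnit_iff_isUnit_det P).mp hP
  have hPP : P * P⁻¹ = 1 := Matrix.mul_nonsing_inv P hPdet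
  have hPP' : P⁻¹ * P = 1 := Matrix.nonsing_inv_mul P hPdet
  set A : ℝ := Real.exp t₀ with hA
  set B : ℝ := Real.exp (-t₀ / 2) with hB
  have hBpos : 0 < B := Real.exp_pos _
  have hAB : A * B ^ 2 = 1 := by
    rw [hA, hB, sq, ← Real.exp_add, ← Real.exp_add, ← Real.exp_zero]
    ring_nf
  -- powers of the conjugate
  have hpow : ∀ k : ℕ, (N ^ k).map (fun z => (z : ℝ)) = P⁻¹ * D ^ k * P := by
    intro k
    have hmap : ∀ m : Matrix (Fin 6) (Fin 6) ℤ, ∀ k : ℕ,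
        (m ^ k).map (fun z => ((z : ℤ) : ℝ)) = (m.map (fun z => (z : ℝ))) ^ k := by
      intro m k
      have := map_pow ((Int.castRingHom ℝ).mapMatrix) m k
      simpa [RingHom.mapMatrix_apply] using this
    rw [hmap, ← hN]
    induction k with
    | zero => simp [hPP']
    | succ n ih =>
      rw [pow_succ, pow_succ, ih]
      rw [show P⁻¹ * D ^ n * P * (P⁻¹ * D * P) = P⁻¹ * D ^ n * (P * P⁻¹) * D * P by
        noncomm_ring]
      rw [hPP]
      noncomm_ring
  -- trace formula
  have htr : ∀ k : ℕ, (((N ^ k).trace : ℤ) : ℝ) = A ^ k + 2 * B ^ k + 3 := by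
    intro k
    have h1 : (((N ^ k).trace : ℤ) : ℝ) = ((N ^ k).map (fun z => (z : ℝ))).trace := by
      exact AddMonoidHom.map_trace (Int.castRingHom ℝ).toAddMonoidHom _
    rw [h1, hpow, Matrix.trace_mul_cycle, hPP, Matrix.one_mul,
      hD, Matrix.diagonal_pow, Matrix.trace_diagonal]
    simp [Fin.sum_univ_succ, hv, Pi.pow_apply, Matrix.cons_val_succ, Matrix.cons_val_zero]
    ring
  -- key algebraic step: for suitable k, get an integer strictly between 0 and 1
  have key : ∀ k : ℕ, ∀ x : ℝ, 0 < x → B ^ k = x →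
      ((((N ^ k).trace - 3 : ℤ) : ℝ) = x⁻¹ ^ 2 + 2 * x) := by
    intro k x hx hxk
    have hAk : A ^ k * x ^ 2 = 1 := by
      rw [← hxk]
      have h : A ^ k * (B ^ k) ^ 2 = (A * B ^ 2) ^ k := by ring
      rw [h, hAB, one_pow]
    have : A ^ k = x⁻¹ ^ 2 := by
      field_simp at hAk ⊢
      linarith [hAk]
    push_cast
    rw [htr k, this, hxk]
    ring
  rcases lt_or_gt_of_ne ht with htneg | htpos
  · -- t₀ < 0 : B = exp(-t₀/2) > 1
    have hB1 : 1 < B := by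
      rw [hB, show (1:ℝ) = Real.exp 0 from (Real.exp_zero).symm]
      exact Real.exp_lt_exp.mpr (by linarith)
    obtain ⟨k, hk⟩ := exists_pow_lt_of_lt_one (show (0:ℝ) < 1/4 by norm_num)
      (show B⁻¹ < 1 by rw [inv_lt_one_iff₀]; right; exact hB1)
    set x : ℝ := B ^ k with hxdef
    have hxpos : 0 < x := pow_pos hBpos k
    have hxbig : 4 < x := by
      have : B⁻¹ ^ k = x⁻¹ := by rw [hxdef, inv_pow]
      rw [this] at hk
      have h4 : (0:ℝ) < 4 := by norm_num
      rw [show (1:ℝ)/4 = 4⁻¹ by norm_num] at hk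
      exact (inv_lt_inv₀ (by positivity) h4).mp hk
    have hq : (((N ^ k).trace - 3 : ℤ) : ℝ) = x⁻¹ ^ 2 + 2 * x :=
      key k x hxpos rfl
    have hq2 : (((N ^ (2*k)).trace - 3 : ℤ) : ℝ) = (x^2)⁻¹ ^ 2 + 2 * x^2 := by
      have : B ^ (2*k) = x ^ 2 := by rw [hxdef, ← pow_mul, mul_comm]
      exact key (2*k) (x^2) (by positivity) this
    set q : ℤ := (N ^ k).trace - 3 with hqdef
    set q2 : ℤ := (N ^ (2*k)).trace - 3 with hq2def
    have hxne : x ≠ 0 := ne_of_gt hxpos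
    have hz : ((q ^ 2 - 2 * q2 : ℤ) : ℝ) = 4 / x - 1 / x ^ 4 := by
      push_cast
      rw [hq, hq2]
      field_simp
      ring
    apply no_int_in_open01 (q ^ 2 - 2 * q2)
    · rw [hz]
      have h3 : 1 < x ^ 3 := by nlinarith
      have h1 : 1 / x ^ 4 < 4 / x := by
        rw [div_lt_div_iff₀ (by positivity) hxpos]
        nlinarith [mul_lt_mul_of_pos_left h3 hxpos]
      linarith
    · rw [hz]
      have h1 : 4 / x < 1 := by
        rw [div_lt_one hxpos]; linarith
      have h2 : 0 < 1 / x ^ 4 := by positivity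
      linarith
  · -- t₀ > 0 : B < 1
    have hB1 : B < 1 := by
      rw [hB, show (1:ℝ) = Real.exp 0 from (Real.exp_zero).symm]
      exact Real.exp_lt_exp.mpr (by linarith)
    obtain ⟨k, hk⟩ := exists_pow_lt_of_lt_one (show (0:ℝ) < 1/16 by norm_num) hB1
    set x : ℝ := B ^ k with hxdef
    have hxpos : 0 < x := pow_pos hBpos k
    have hxsmall : x < 1/16 := hk
    have hq : (((N ^ k).trace - 3 : ℤ) : ℝ) = x⁻¹ ^ 2 + 2 * x :=
      key k x hxpos rfl
    have hq2 : (((N ^ (2*k)).trace - 3 : ℤ) : ℝ) = (x^2)⁻¹ ^ 2 + 2 * x^2 := by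
      have : B ^ (2*k) = x ^ 2 := by rw [hxdef, ← pow_mul, mul_comm]
      exact key (2*k) (x^2) (by positivity) this
    set q : ℤ := (N ^ k).trace - 3 with hqdef
    set q2 : ℤ := (N ^ (2*k)).trace - 3 with hq2def
    have hxne : x ≠ 0 := ne_of_gt hxpos
    have hz : ((16 * q - (q ^ 2 - q2) ^ 2 : ℤ) : ℝ) = 16 * x - 4 * x ^ 4 := by
      push_cast
      rw [hq, hq2]
      field_simp
      ring
    apply no_int_in_open01 (16 * q - (q ^ 2 - q2) ^ 2)
    · rw [hz]
      have hx1 : x < 1 := by linarith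
      have h3 : x ^ 3 < 1 := by nlinarith
      nlinarith [mul_lt_mul_of_pos_left h3 hxpos]
    · rw [hz]
      have h4 : 0 < x ^ 4 := by positivity
      linarith
end
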